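/- Let V be a finite-dimensional real vector space and A ⊆ End(V) a subspace with 2·dim A ≤ dim V. If the set of pairs (X,Y) with dim(A(X)+A(Y)) = 2·dim A is open and dense in V × V (generic rank), then the set of X with dim A(X) = dim A is open and dense in V (weak generic rank). -/

import Mathlib

/-!
Full rank of `A` at `X` means that the images of a basis of `A` under evaluation at `X` are
linearly independent, an open condition. For density, `A(X) + A(Y)` has dimension at most
`dim A(X) + dim A(Y) ≤ 2 dim A`, so wherever generic rank holds both `A(X)` and `A(Y)` have
full dimension; the first projection carries the dense set of such pairs onto a dense set.
-/

open Module Submodule Set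

theorem Submodule.finrank_map_eq_iff_linearIndependent {K M N : Type*} [DivisionRing K]
    [AddCommGroup M] [Module K M] [AddCommGroup N] [Module K N] (W : Submodule K M)
    [FiniteDimensional K W] (f : M →ₗ[K] N) :
    finrank K (W.map f) = finrank K W ↔
      LinearIndependent K (fun i => f (finBasis K W i)) := by
  have hspan : W.map f = span K (range fun i => f (finBasis K W i)) := by
    conv_lhs => rw [← W.map_subtype_top, ← (finBasis K W).span_eq]
    rw [map_span, map_span, ← image_comp, ← range_comp]
    rfl
  rw [hspan, linearIndependent_iff_card_eq_finrank_span, Set.finrank, Fintype.card_fin, eq_comm]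

theorem Submodule.finrank_eq_of_finrank_sup_eq_add {K V : Type*} [DivisionRing K]
    [AddCommGroup V] [Module K V] {U W : Submodule K V} [FiniteDimensional K U]
    [FiniteDimensional K W] {n : ℕ} (hU : finrank K U ≤ n) (hW : finrank K W ≤ n)
    (hsup : finrank K ↥(U ⊔ W) = 2 * n) : finrank K U = n := by
  have := finrank_add_le_finrank_add_finrank U W
  omega

theorem finrank_map_applyₗ_eq_of_finrank_sup_eq {K V : Type*} [Field K] [AddCommGroup V]
    [Module K V] [FiniteDimensional K V] (A : Submodule K (V →ₗ[K] V)) {X Y : V}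
    (h : finrank K ↥(A.map (LinearMap.applyₗ X) ⊔ A.map (LinearMap.applyₗ Y)) =
      2 * finrank K A) :
    finrank K (A.map (LinearMap.applyₗ X)) = finrank K A :=
  finrank_eq_of_finrank_sup_eq_add (finrank_map_le _ _) (finrank_map_le _ _) h

theorem isOpen_setOf_finrank_map_applyₗ_eq {𝕜 V : Type*} [NontriviallyNormedField 𝕜]
    [CompleteSpace 𝕜] [NormedAddCommGroup V] [NormedSpace 𝕜 V] [FiniteDimensional 𝕜 V]
    (A : Submodule 𝕜 (V →ₗ[𝕜] V)) :
    IsOpen {X : V | finrank 𝕜 (A.map (LinearMap.applyₗ X)) = finrank 𝕜 A} := by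
  have hcont : Continuous fun (X : V) i => (finBasis 𝕜 A i : V →ₗ[𝕜] V) X :=
    continuous_pi fun i => (finBasis 𝕜 A i : V →ₗ[𝕜] V).continuous_of_finiteDimensional
  convert (isOpen_setOfPred_linearIndependent (𝕜 := 𝕜)).preimage hcont using 1
  ext X
  exact A.finrank_map_eq_iff_linearIndependent (LinearMap.applyₗ X)

theorem stmt_8_general {V : Type*} [NormedAddCommGroup V] [NormedSpace ℝ V]
    [FiniteDimensional ℝ V] (A : Submodule ℝ (V →ₗ[ℝ] V))
    (hdense : Dense {p : V × V |
        Module.finrank ℝ (A.map (LinearMap.applyₗ p.1) ⊔ A.map (LinearMap.applyₗ p.2) :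
          Submodule ℝ V) = 2 * Module.finrank ℝ A}) :
    IsOpen {X : V | Module.finrank ℝ (A.map (LinearMap.applyₗ X)) = Module.finrank ℝ A} ∧
      Dense {X : V | Module.finrank ℝ (A.map (LinearMap.applyₗ X)) = Module.finrank ℝ A} := by
  refine ⟨isOpen_setOf_finrank_map_applyₗ_eq A, ?_⟩
  have hfst : Dense (Prod.fst '' {p : V × V |
      finrank ℝ ↥(A.map (LinearMap.applyₗ p.1) ⊔ A.map (LinearMap.applyₗ p.2)) =
        2 * finrank ℝ A}) :=
    (Prod.fst_surjective.denseRange).dense_image continuous_fst hdense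
  refine hfst.mono ?_
  rintro _ ⟨p, hp, rfl⟩
  exact finrank_map_applyₗ_eq_of_finrank_sup_eq A hp

theorem stmt_8 {V : Type*} [NormedAddCommGroup V] [NormedSpace ℝ V]
    [FiniteDimensional ℝ V] (A : Submodule ℝ (V →ₗ[ℝ] V))
    (hℓ : 2 * Module.finrank ℝ A ≤ Module.finrank ℝ V)
    (hopen : IsOpen {p : V × V |
        Module.finrank ℝ (A.map (LinearMap.applyₗ p.1) ⊔ A.map (LinearMap.applyₗ p.2) :
          Submodule ℝ V) = 2 * Module.finrank ℝ A})
    (hdense : Dense {p : V × V |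
        Module.finrank ℝ (A.map (LinearMap.applyₗ p.1) ⊔ A.map (LinearMap.applyₗ p.2) :
          Submodule ℝ V) = 2 * Module.finrank ℝ A}) :
    IsOpen {X : V | Module.finrank ℝ (A.map (LinearMap.applyₗ X)) = Module.finrank ℝ A} ∧
      Dense {X : V | Module.finrank ℝ (A.map (LinearMap.applyₗ X)) = Module.finrank ℝ A} :=
  stmt_8_general A hdense
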